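/- arXiv:1912.13154 — 2 statements merged into one kernel-verified Lean document; each statement's English description precedes it below -/
import Mathlib

section
/- Consider the linearly parameterized error dynamics ṡ = −η s + Y(t)(â − a) with η > 0, together with the higher-order composite adaptation law v̂̇ = −Y(t)ᵀ(γ s + κ Y(t)(â − a)), â̇ = β 𝒩(t)(v̂ − â), where 𝒩(t) = 1 + μ‖Y(t)‖², γ, κ, β > 0, and μ > (γ/β)(1/η + κ/γ). Then all trajectories (x, v̂, â) remain bounded, (v̂ − â) ∈ L², s ∈ L∞ ∩ L², f̃ = Y(â − a) ∈ L∞ ∩ L², s(t) → 0 as t → ∞, and x(t) → x_d(t). -/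
open MeasureTheory Filter
open scoped RealInnerProductSpace ENNReal

noncomputable section

/-- The signal `g` is square-integrable (`L²`) on `[0, ∞)`. -/
def InL2 {F : Type*} [NormedAddCommGroup F] (g : ℝ → F) : Prop :=
  ∫⁻ t in Set.Ici (0 : ℝ), ENNReal.ofReal (‖g t‖ ^ 2) < ⊤

/-- The signal `g` is bounded (`L∞`) on `[0, ∞)`. -/
def InLinf {F : Type*} [NormedAddCommGroup F] (g : ℝ → F) : Prop :=
  ∃ C : ℝ, ∀ t : ℝ, 0 ≤ t → ‖g t‖ ≤ C

/-
The proof is a Lyapunov argument with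
`V = γ/2 · s² + ½‖v̂ - a‖² + ½‖v̂ - â‖²`.
Along trajectories `V̇ = -γη s² - κ f̃² - 2(γ s + κ f̃) Y(v̂ - â) - β 𝒩 ‖v̂ - â‖²`, and by Young's
inequality the cross term is absorbed by the normalisation term `β μ ‖Y‖² ‖v̂ - â‖²` exactly when
`μ > (γ/β)(1/η + κ/γ)`, leaving `V̇ ≤ -c (s² + f̃² + ‖v̂ - â‖²)` for some `c > 0`.
So `V` is nonincreasing, which bounds `s`, `v̂ - a` and `v̂ - â`, hence `x`, `Y` and `f̃`; and
`∫ (s² + f̃² + ‖v̂ - â‖²) ≤ V(0)/c` gives the `L²` claims. Finally `s ∈ L²` with `ṡ = -η s + f̃`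
bounded forces `s → 0` (Barbalat).
-/

open Set

theorem exists_dissipation_rate {η γ κ β μ : ℝ} (hη : 0 < η) (hγ : 0 < γ) (hκ : 0 < κ)
    (hβ : 0 < β) (hμ : (γ / β) * (1 / η + κ / γ) < μ) :
    ∃ c > 0, ∀ S Q P E R : ℝ, P ^ 2 ≤ R * E ^ 2 →
      -(γ * η) * S ^ 2 - κ * Q ^ 2 - 2 * (γ * S + κ * Q) * P - β * E ^ 2 - β * μ * (R * E ^ 2)
        ≤ -c * (S ^ 2 + Q ^ 2 + E ^ 2) := by
  have hβμ : γ / η + κ < β * μ :=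
    calc γ / η + κ = β * ((γ / β) * (1 / η + κ / γ)) := by field_simp
      _ < β * μ := by gcongr
  have hβμ₀ : 0 < β * μ := lt_trans (by positivity) hβμ
  set θ := (γ / η + κ) / (β * μ) with hθ
  have hθ₀ : 0 < θ := by positivity
  have hθ₁ : θ < 1 := (div_lt_one hβμ₀).2 hβμ
  refine ⟨min (min ((1 - θ) * (γ * η)) ((1 - θ) * κ)) β,
    lt_min (lt_min (by nlinarith [mul_pos hγ hη]) (by nlinarith)) hβ, fun S Q P E R hP => ?_⟩
  -- Young's inequality with weight `θ`; the choice of `θ` makes the `P²` terms sum to `β μ P²`.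
  have young :
      -(2 * (γ * S + κ * Q) * P) ≤ θ * (γ * η) * S ^ 2 + θ * κ * Q ^ 2 + β * μ * P ^ 2 := by
    have hsq : 0 ≤ γ / (θ * η) * (θ * η * S + P) ^ 2 + κ / θ * (θ * Q + P) ^ 2 := by positivity
    have hexp : γ / (θ * η) * (θ * η * S + P) ^ 2 + κ / θ * (θ * Q + P) ^ 2
        = θ * (γ * η) * S ^ 2 + θ * κ * Q ^ 2 + 2 * (γ * S + κ * Q) * P + β * μ * P ^ 2 := by
      have hμ₀ : μ ≠ 0 := by rintro rfl; simp at hβμ₀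
      rw [hθ]; field_simp; ring
    linarith
  have hc₁ := min_le_left (min ((1 - θ) * (γ * η)) ((1 - θ) * κ)) β
  have hc₂ := min_le_left ((1 - θ) * (γ * η)) ((1 - θ) * κ)
  have hc₃ := min_le_right ((1 - θ) * (γ * η)) ((1 - θ) * κ)
  have hc₄ := min_le_right (min ((1 - θ) * (γ * η)) ((1 - θ) * κ)) β
  nlinarith [mul_le_mul_of_nonneg_left hP hβμ₀.le,
    mul_le_mul_of_nonneg_right (hc₁.trans hc₂) (sq_nonneg S),
    mul_le_mul_of_nonneg_right (hc₁.trans hc₃) (sq_nonneg Q),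
    mul_le_mul_of_nonneg_right hc₄ (sq_nonneg E)]

section SignalSpaces

variable {F : Type*} [NormedAddCommGroup F]

theorem inLinf_const (v : F) : InLinf fun _ : ℝ => v := ⟨‖v‖, fun _ _ => le_rfl⟩

theorem inLinf_of_sq_le {g : ℝ → F} {C : ℝ} (h : ∀ t ≥ 0, ‖g t‖ ^ 2 ≤ C) : InLinf g :=
  ⟨√C, fun t ht => (abs_of_nonneg (norm_nonneg _)).symm.trans_le (Real.abs_le_sqrt (h t ht))⟩

theorem InLinf.add {f g : ℝ → F} (hf : InLinf f) (hg : InLinf g) : InLinf fun t => f t + g t := by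
  obtain ⟨C, hC⟩ := hf
  obtain ⟨D, hD⟩ := hg
  exact ⟨C + D, fun t ht => (norm_add_le _ _).trans (add_le_add (hC t ht) (hD t ht))⟩

theorem InLinf.sub {f g : ℝ → F} (hf : InLinf f) (hg : InLinf g) : InLinf fun t => f t - g t := by
  obtain ⟨C, hC⟩ := hf
  obtain ⟨D, hD⟩ := hg
  exact ⟨C + D, fun t ht => (norm_sub_le _ _).trans (add_le_add (hC t ht) (hD t ht))⟩

theorem InLinf.const_mul {f : ℝ → ℝ} (hf : InLinf f) (c : ℝ) : InLinf fun t => c * f t := by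
  obtain ⟨C, hC⟩ := hf
  exact ⟨|c| * C, fun t ht => by
    rw [norm_mul, Real.norm_eq_abs]; exact mul_le_mul_of_nonneg_left (hC t ht) (abs_nonneg c)⟩

theorem InLinf.inner {E : Type*} [NormedAddCommGroup E] [InnerProductSpace ℝ E] {f g : ℝ → E}
    (hf : InLinf f) (hg : InLinf g) : InLinf fun t => ⟪f t, g t⟫ := by
  obtain ⟨C, hC⟩ := hf
  obtain ⟨D, hD⟩ := hg
  exact ⟨C * D, fun t ht => (norm_inner_le_norm _ _).trans
    (mul_le_mul (hC t ht) (hD t ht) (norm_nonneg _) ((norm_nonneg _).trans (hC t ht)))⟩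

theorem integrableOn_sq_of_inL2 {g : ℝ → F} (hg : InL2 g) (hc : ContinuousOn g (Ici 0)) :
    IntegrableOn (fun t => ‖g t‖ ^ 2) (Ici 0) :=
  ⟨((continuous_norm.comp_continuousOn hc).pow 2).aestronglyMeasurable measurableSet_Ici,
    (hasFiniteIntegral_iff_ofReal (ae_of_all _ fun _ => sq_nonneg _)).2 hg⟩

theorem inL2_of_sq_le {g : ℝ → F} {G : ℝ → ℝ} (hG : IntegrableOn G (Ici 0))
    (h : ∀ t ≥ 0, ‖g t‖ ^ 2 ≤ G t) : InL2 g :=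
  calc ∫⁻ t in Ici 0, ENNReal.ofReal (‖g t‖ ^ 2)
      ≤ ∫⁻ t in Ici 0, ENNReal.ofReal (G t) :=
        setLIntegral_mono' measurableSet_Ici fun t ht => ENNReal.ofReal_le_ofReal (h t ht)
    _ < ⊤ := hG.lintegral_lt_top

end SignalSpaces

section Lyapunov

variable {V V' : ℝ → ℝ} {a : ℝ}

theorem antitoneOn_Ici_of_hasDerivAt_nonpos (hV : ∀ t ≥ a, HasDerivAt V (V' t) t)
    (hV' : ∀ t ≥ a, V' t ≤ 0) : AntitoneOn V (Ici a) :=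
  antitoneOn_of_hasDerivWithinAt_nonpos (convex_Ici a)
    (fun t ht => (hV t ht).continuousAt.continuousWithinAt)
    (fun t ht => (hV t (interior_subset ht)).hasDerivWithinAt)
    (fun t ht => hV' t (interior_subset ht))

theorem integrableOn_Ici_neg_deriv_of_nonpos_of_bddBelow {C : ℝ}
    (hV : ∀ t ≥ a, HasDerivAt V (V' t) t) (hV' : ∀ t ≥ a, V' t ≤ 0) (hC : ∀ t ≥ a, C ≤ V t) :
    IntegrableOn (fun t => -V' t) (Ici a) := by
  have hanti := antitoneOn_Ici_of_hasDerivAt_nonpos hV hV'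
  -- `V ∘ max a` is antitone on all of `ℝ` and agrees with `V` near `+∞`
  have hext : Antitone fun t => V (max a t) := fun s t hst =>
    hanti (le_max_left a s) (le_max_left a t) (max_le_max le_rfl hst)
  have hlim : Tendsto V atTop (nhds (⨅ t, V (max a t))) :=
    (tendsto_atTop_ciInf hext ⟨C, forall_mem_range.2 fun t => hC _ (le_max_left a t)⟩).congr'
      ((eventually_ge_atTop a).mono fun t ht => by rw [max_eq_right ht])
  rw [integrableOn_Ici_iff_integrableOn_Ioi]
  exact integrableOn_Ioi_deriv_of_nonneg' (fun t ht => (hV t ht).neg)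
    (fun t ht => neg_nonneg.2 (hV' t (le_of_lt ht))) hlim.neg

end Lyapunov

theorem tendsto_zero_of_inL2_of_inLinf_deriv {E : Type*} [NormedAddCommGroup E] [NormedSpace ℝ E]
    {f f' : ℝ → E} (hf : ∀ t ≥ 0, HasDerivAt f (f' t) t) (hf2 : InL2 f) (hf' : InLinf f') :
    Tendsto f atTop (nhds 0) := by
  obtain ⟨K, hK⟩ := hf'
  have hint : IntegrableOn (fun t => ‖f t‖ ^ 2) (Ici 0) :=
    integrableOn_sq_of_inL2 hf2 fun t ht => (hf t ht).continuousAt.continuousWithinAt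
  have hii : ∀ t₁ t₂, 0 ≤ t₁ → 0 ≤ t₂ → IntervalIntegrable (fun t => ‖f t‖ ^ 2) volume t₁ t₂ :=
    fun t₁ t₂ h₁ h₂ => (hint.mono_set fun u hu => le_trans (le_min h₁ h₂) hu.1).intervalIntegrable
  set I : ℝ → ℝ := fun T => ∫ u in (0 : ℝ)..T, ‖f u‖ ^ 2
  rw [Metric.tendsto_nhds]
  intro ε hε
  set l := ε / (2 * (|K| + 1))
  have hl : 0 < l := by positivity
  have hKl : |K| * l ≤ ε / 2 := by
    calc |K| * l ≤ (|K| + 1) * l := by gcongr; linarith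
      _ = ε / 2 := by simp only [l]; field_simp
  have htail : Tendsto (fun t => I (t + l) - I t) atTop (nhds 0) := by
    have h := intervalIntegral_tendsto_integral_Ioi 0 (hint.mono_set Ioi_subset_Ici_self) tendsto_id
    simpa using (h.comp (tendsto_atTop_add_const_right _ l tendsto_id)).sub h
  -- If `‖f t‖ ≥ ε`, the derivative bound keeps `‖f‖ ≥ ε / 2` on `[t, t + l]`, which puts at least
  -- `(ε / 2)² l` of `L²` mass into a window whose mass tends to `0`.
  filter_upwards [eventually_ge_atTop 0, htail.eventually (gt_mem_nhds (by positivity :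
    0 < (ε / 2) ^ 2 * l))] with t ht hsmall
  rw [dist_zero_right]
  by_contra! hft
  have hwindow : ∀ u ∈ Icc t (t + l), ε / 2 ≤ ‖f u‖ := by
    intro u hu
    have hlip := norm_image_sub_le_of_norm_deriv_le_segment'
      (fun v hv => (hf v (ht.trans hv.1)).hasDerivWithinAt) (fun v hv => hK v (ht.trans hv.1)) u hu
    have hK' : K * (u - t) ≤ |K| * l :=
      mul_le_mul (le_abs_self K) (by linarith [hu.2]) (by linarith [hu.1]) (abs_nonneg K)
    linarith [norm_sub_norm_le (f t) (f u), norm_sub_rev (f t) (f u)]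
  have hmass : (ε / 2) ^ 2 * l ≤ I (t + l) - I t := by
    rw [intervalIntegral.integral_interval_sub_left (hii 0 _ le_rfl (by linarith))
      (hii 0 t le_rfl ht)]
    calc (ε / 2) ^ 2 * l = ∫ _ in t..(t + l), (ε / 2) ^ 2 := by
          rw [intervalIntegral.integral_const, smul_eq_mul, add_sub_cancel_left, mul_comm]
      _ ≤ ∫ u in t..(t + l), ‖f u‖ ^ 2 :=
        intervalIntegral.integral_mono_on (by linarith) intervalIntegrable_const
          (hii t _ ht (by linarith)) fun u hu => by gcongr; exact hwindow u hu
  linarith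

section CompositeAdaptation

variable {E : Type*} [NormedAddCommGroup E]
  {s : ℝ → ℝ} {Y : ℝ → E} {a : E} {ahat vhat : ℝ → E} {η γ κ β μ : ℝ}

def compositeLyapunov (γ : ℝ) (s : ℝ → ℝ) (a : E) (ahat vhat : ℝ → E) (t : ℝ) : ℝ :=
  γ / 2 * s t ^ 2 + ‖vhat t - a‖ ^ 2 / 2 + ‖vhat t - ahat t‖ ^ 2 / 2

theorem compositeLyapunov_nonneg (hγ : 0 ≤ γ) (t : ℝ) : 0 ≤ compositeLyapunov γ s a ahat vhat t :=
  add_nonneg (add_nonneg (mul_nonneg (div_nonneg hγ zero_le_two) (sq_nonneg _)) (by positivity))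
    (by positivity)

theorem inLinf_of_compositeLyapunov_le {C : ℝ} (hγ : 0 < γ)
    (hV : ∀ t ≥ 0, compositeLyapunov γ s a ahat vhat t ≤ C) :
    InLinf s ∧ InLinf (fun t => vhat t - a) ∧ InLinf (fun t => vhat t - ahat t) := by
  simp only [compositeLyapunov] at hV
  refine ⟨inLinf_of_sq_le (C := 2 * C / γ) fun t ht => ?_,
    inLinf_of_sq_le (C := 2 * C) fun t ht => ?_, inLinf_of_sq_le (C := 2 * C) fun t ht => ?_⟩
  · rw [Real.norm_eq_abs, sq_abs, le_div_iff₀ hγ]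
    linarith [hV t ht, sq_nonneg ‖vhat t - a‖, sq_nonneg ‖vhat t - ahat t‖]
  · linarith [hV t ht, mul_nonneg hγ.le (sq_nonneg (s t)), sq_nonneg ‖vhat t - ahat t‖]
  · linarith [hV t ht, mul_nonneg hγ.le (sq_nonneg (s t)), sq_nonneg ‖vhat t - a‖]

variable [InnerProductSpace ℝ E]

theorem hasDerivAt_compositeLyapunov {t : ℝ}
    (hs : HasDerivAt s (-η * s t + ⟪Y t, ahat t - a⟫) t)
    (hv : HasDerivAt vhat (-((γ * s t + κ * ⟪Y t, ahat t - a⟫) • Y t)) t)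
    (ha : HasDerivAt ahat ((β * (1 + μ * ‖Y t‖ ^ 2)) • (vhat t - ahat t)) t) :
    HasDerivAt (compositeLyapunov γ s a ahat vhat)
      (-(γ * η) * s t ^ 2 - κ * ⟪Y t, ahat t - a⟫ ^ 2
        - 2 * (γ * s t + κ * ⟪Y t, ahat t - a⟫) * ⟪Y t, vhat t - ahat t⟫
        - β * ‖vhat t - ahat t‖ ^ 2 - β * μ * (‖Y t‖ ^ 2 * ‖vhat t - ahat t‖ ^ 2)) t := by
  have h := ((((hs.pow 2).const_mul (γ / 2)).add ((hv.sub_const a).norm_sq.div_const 2)).add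
    ((hv.sub ha).norm_sq.div_const 2))
  refine h.congr_deriv ?_
  simp only [Pi.sub_apply]
  set e := vhat t - ahat t
  have hw : vhat t - a = (ahat t - a) + e := (sub_add_sub_cancel' _ _ _).symm
  simp only [inner_sub_right, inner_neg_right, real_inner_smul_right, real_inner_self_eq_norm_sq,
    hw, inner_add_left, real_inner_comm (Y t)]
  push_cast
  ring

theorem exists_compositeLyapunov_dissipation (hη : 0 < η) (hγ : 0 < γ) (hκ : 0 < κ) (hβ : 0 < β)
    (hμ : (γ / β) * (1 / η + κ / γ) < μ)
    (hs : ∀ t ≥ 0, HasDerivAt s (-η * s t + ⟪Y t, ahat t - a⟫) t)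
    (hv : ∀ t ≥ 0, HasDerivAt vhat (-((γ * s t + κ * ⟪Y t, ahat t - a⟫) • Y t)) t)
    (ha : ∀ t ≥ 0, HasDerivAt ahat ((β * (1 + μ * ‖Y t‖ ^ 2)) • (vhat t - ahat t)) t) :
    ∃ c > 0, ∀ t ≥ 0,
      HasDerivAt (compositeLyapunov γ s a ahat vhat)
        (deriv (compositeLyapunov γ s a ahat vhat) t) t ∧
      deriv (compositeLyapunov γ s a ahat vhat) t
        ≤ -c * (s t ^ 2 + ⟪Y t, ahat t - a⟫ ^ 2 + ‖vhat t - ahat t‖ ^ 2) := by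
  obtain ⟨c, hc, hdiss⟩ := exists_dissipation_rate hη hγ hκ hβ hμ
  refine ⟨c, hc, fun t ht => ?_⟩
  have hV := hasDerivAt_compositeLyapunov (hs t ht) (hv t ht) (ha t ht)
  have hCS : ⟪Y t, vhat t - ahat t⟫ ^ 2 ≤ ‖Y t‖ ^ 2 * ‖vhat t - ahat t‖ ^ 2 := by
    rw [← mul_pow, ← sq_abs]
    exact pow_le_pow_left₀ (abs_nonneg _) (abs_real_inner_le_norm _ _) 2
  rw [hV.deriv]
  exact ⟨hV, hdiss _ _ _ _ _ hCS⟩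

end CompositeAdaptation

/-- higher-order composite adaptation law.
The error dynamics `ṡ = -η s + Y(t)(â - a)` together with the higher-order composite law
`v̂̇ = -Y(t)ᵀ(γ s + κ Y(t)(â - a))`, `â̇ = β 𝒩(t)(v̂ - â)`, `𝒩(t) = 1 + μ‖Y(t)‖²`,
`μ > (γ/β)(1/η + κ/γ)`, guarantees that all trajectories remain bounded, `(v̂ - â) ∈ L²`,
`s ∈ L∞ ∩ L²`, `f̃ = Y(â - a) ∈ L∞ ∩ L²`, `s → 0` and `x → x_d`. -/
theorem higher_order_composite_adaptation_linear
    {n p : ℕ}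
    (x xd : ℝ → EuclideanSpace ℝ (Fin n))
    (s : ℝ → ℝ)
    (Y : ℝ → EuclideanSpace ℝ (Fin p))
    (a : EuclideanSpace ℝ (Fin p))
    (ahat vhat : ℝ → EuclideanSpace ℝ (Fin p))
    (η γ κ β μ : ℝ)
    (hη : 0 < η) (hγ : 0 < γ) (hκ : 0 < κ) (hβ : 0 < β)
    (hμ : (γ / β) * (1 / η + κ / γ) < μ)
    -- error dynamics ṡ = -η s + Y (â - a)
    (hs : ∀ t, 0 ≤ t → HasDerivAt s (-η * s t + ⟪Y t, ahat t - a⟫) t)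
    -- higher-order composite adaptation law
    (hv : ∀ t, 0 ≤ t →
      HasDerivAt vhat (-((γ * s t + κ * ⟪Y t, ahat t - a⟫) • Y t)) t)
    (ha : ∀ t, 0 ≤ t →
      HasDerivAt ahat ((β * (1 + μ * ‖Y t‖ ^ 2)) • (vhat t - ahat t)) t)
    -- the regressor Y(x, t) is locally bounded in x uniformly in t
    (hYloc : ∀ R : ℝ, ∃ M : ℝ, ∀ t, 0 ≤ t → ‖x t‖ ≤ R → ‖Y t‖ ≤ M)
    -- boundedness of s implies boundedness of x
    (hsx : InLinf s → InLinf x)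
    -- s → 0 implies x → x_d
    (hxd : Tendsto s atTop (nhds 0) →
      Tendsto (fun t => x t - xd t) atTop (nhds 0)) :
    InLinf x ∧ InLinf vhat ∧ InLinf ahat ∧
    InL2 (fun t => vhat t - ahat t) ∧
    (InLinf s ∧ InL2 s) ∧
    (InLinf (fun t => ⟪Y t, ahat t - a⟫) ∧ InL2 (fun t => ⟪Y t, ahat t - a⟫)) ∧
    Tendsto s atTop (nhds 0) ∧
    Tendsto (fun t => x t - xd t) atTop (nhds 0) := by
  obtain ⟨c, hc, hV⟩ := exists_compositeLyapunov_dissipation hη hγ hκ hβ hμ hs hv ha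
  set V := compositeLyapunov γ s a ahat vhat
  set q := fun t => ⟪Y t, ahat t - a⟫
  have hV' : ∀ t ≥ 0, deriv V t ≤ 0 := fun t ht =>
    (hV t ht).2.trans (mul_nonpos_of_nonpos_of_nonneg (neg_nonpos.2 hc.le) (by positivity))
  have hanti := antitoneOn_Ici_of_hasDerivAt_nonpos (fun t ht => (hV t ht).1) hV'
  obtain ⟨hsInf, hwInf, heInf⟩ :=
    inLinf_of_compositeLyapunov_le hγ fun t ht => hanti self_mem_Ici ht ht
  obtain ⟨R, hR⟩ := hsx hsInf
  obtain ⟨M, hM⟩ := hYloc R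
  have haInf : InLinf fun t => ahat t - a := by simpa using hwInf.sub heInf
  have hqInf : InLinf q := InLinf.inner ⟨M, fun t ht => hM t ht (hR t ht)⟩ haInf
  have hG : IntegrableOn (fun t => -deriv V t / c) (Ici 0) :=
    (integrableOn_Ici_neg_deriv_of_nonpos_of_bddBelow (fun t ht => (hV t ht).1) hV'
      fun t _ => compositeLyapunov_nonneg hγ.le t).div_const c
  have hdom : ∀ t ≥ 0, s t ^ 2 + q t ^ 2 + ‖vhat t - ahat t‖ ^ 2 ≤ -deriv V t / c :=
    fun t ht => by rw [le_div_iff₀ hc]; linarith [(hV t ht).2]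
  have hsL2 : InL2 s := inL2_of_sq_le hG fun t ht => by
    rw [Real.norm_eq_abs, sq_abs]
    linarith [hdom t ht, sq_nonneg (q t), sq_nonneg ‖vhat t - ahat t‖]
  have hqL2 : InL2 q := inL2_of_sq_le hG fun t ht => by
    rw [Real.norm_eq_abs, sq_abs]
    linarith [hdom t ht, sq_nonneg (s t), sq_nonneg ‖vhat t - ahat t‖]
  have heL2 : InL2 fun t => vhat t - ahat t := inL2_of_sq_le hG fun t ht => by
    linarith [hdom t ht, sq_nonneg (s t), sq_nonneg (q t)]
  have hlim : Tendsto s atTop (nhds 0) :=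
    tendsto_zero_of_inL2_of_inLinf_deriv hs hsL2 ((hsInf.const_mul (-η)).add hqInf)
  exact ⟨⟨R, hR⟩, by simpa using hwInf.add (inLinf_const a),
    by simpa using haInf.add (inLinf_const a), heL2, ⟨hsInf, hsL2⟩, ⟨hqInf, hqL2⟩, hlim, hxd hlim⟩

end
end

section
/- Consider the linearly parameterized error dynamics ṡ = −η s + Y(t)(â − a) with η > 0, together with the elastic adaptation law â̇ = −P Y(t)ᵀ s + k(ā − â), ā̇ = k(â − ā), where P = Pᵀ > 0 is a constant positive definite matrix and k > 0. Then all trajectories (x, â, ā) remain bounded, s ∈ L² ∩ L∞, (â − ā) ∈ L², s(t) → 0 as t → ∞, and x(t) → x_d(t). -/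
/-!
With `Q = P⁻¹`, the function `V = s² + (â - a)ᵀQ(â - a) + (ā - a)ᵀQ(ā - a)` satisfies
`V̇ = -2ηs² - 2k(â - ā)ᵀQ(â - ā) ≤ 0`: the `P` in the adaptation law makes the cross terms
`± 2 s Y(â - a)` cancel, and the two elastic terms combine into `-2k(â - ā)ᵀQ(â - ā)`.
So `V` stays below `V 0`, which bounds `s`, `â` and `ā`, and the dissipation is integrable,
which puts `s` and `â - ā` in `L²`. Bounded `s` gives bounded `x`, hence bounded `Y` and `ṡ`;
then `s²` is integrable and uniformly continuous, and Barbalat's lemma gives `s → 0`.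
-/

open MeasureTheory Filter
open scoped RealInnerProductSpace ENNReal

noncomputable section

open Set Topology

section LinearAlgebra
variable {E : Type*} [NormedAddCommGroup E] [InnerProductSpace ℝ E] [FiniteDimensional ℝ E]

theorem exists_pos_mul_norm_sq_le_inner_map_self (T : E →L[ℝ] E)
    (hT : ∀ v ≠ 0, 0 < ⟪v, T v⟫) : ∃ c > 0, ∀ v, c * ‖v‖ ^ 2 ≤ ⟪v, T v⟫ := by
  obtain ⟨c, hc, hcT⟩ := (isCompact_sphere (0 : E) 1).exists_forall_le'
    (continuous_id.inner T.continuous).continuousOn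
    fun v hv ↦ hT v (ne_zero_of_mem_unit_sphere ⟨v, hv⟩)
  refine ⟨c, hc, fun v ↦ ?_⟩
  rcases eq_or_ne v 0 with rfl | hv
  · simp
  have hnv : 0 < ‖v‖ := norm_pos_iff.2 hv
  have hunit : ‖v‖⁻¹ • v ∈ Metric.sphere (0 : E) 1 := by
    simp [norm_smul, hnv.ne']
  have := hcT _ hunit
  rw [id, map_smul, real_inner_smul_left, real_inner_smul_right, ← mul_assoc, ← sq,
    inv_pow, ← div_eq_inv_mul, le_div_iff₀ (by positivity)] at this
  exact this

theorem exists_inverse_of_isSymmetric_of_inner_pos (P : E →L[ℝ] E)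
    (hPsym : (P : E →ₗ[ℝ] E).IsSymmetric) (hPpos : ∀ v ≠ 0, 0 < ⟪v, P v⟫) :
    ∃ Q : E →L[ℝ] E, (∀ v, Q (P v) = v) ∧ (Q : E →ₗ[ℝ] E).IsSymmetric ∧
      ∀ v ≠ 0, 0 < ⟪v, Q v⟫ := by
  have hinj : Function.Injective (P : E →ₗ[ℝ] E) := by
    refine (injective_iff_map_eq_zero _).2 fun v hv ↦ ?_
    by_contra hv0
    have hPv : P v = 0 := hv
    simpa [hPv] using hPpos v hv0
  let e := LinearEquiv.ofInjectiveEndo _ hinj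
  let Q : E →L[ℝ] E := LinearMap.toContinuousLinearMap e.symm.toLinearMap
  have hPQ (v : E) : P (Q v) = v := e.apply_symm_apply v
  refine ⟨Q, e.symm_apply_apply, fun v w ↦ ?_, fun v hv ↦ ?_⟩
  · change ⟪Q v, w⟫ = ⟪v, Q w⟫
    conv_lhs => rw [← hPQ w]
    rw [show ⟪Q v, P (Q w)⟫ = ⟪P (Q v), Q w⟫ from (hPsym _ _).symm, hPQ]
  · have hQv : Q v ≠ 0 := fun h ↦ hv (by rw [← hPQ v, h, map_zero])
    simpa [real_inner_comm, hPQ] using hPpos (Q v) hQv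
end LinearAlgebra

section Lyapunov
variable {V g : ℝ → ℝ} {t₀ : ℝ}

theorem antitoneOn_Ici_of_hasDerivAt_neg (hV : ∀ t ∈ Ici t₀, HasDerivAt V (-g t) t)
    (hg : ∀ t ∈ Ici t₀, 0 ≤ g t) : AntitoneOn V (Ici t₀) := by
  refine antitoneOn_of_hasDerivWithinAt_nonpos (f' := fun t ↦ -g t) (convex_Ici t₀)
    (fun t ht ↦ (hV t ht).continuousAt.continuousWithinAt) (fun t ht ↦ ?_) fun t ht ↦ ?_
  all_goals rw [interior_Ici] at ht
  · exact (hV t (mem_Ici_of_Ioi ht)).hasDerivWithinAt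
  · exact neg_nonpos.2 (hg t (mem_Ici_of_Ioi ht))

theorem integrableOn_Ioi_of_hasDerivAt_neg (hV : ∀ t ∈ Ici t₀, HasDerivAt V (-g t) t)
    (hg : ∀ t ∈ Ici t₀, 0 ≤ g t) {m : ℝ} (hm : ∀ t ∈ Ici t₀, m ≤ V t) :
    IntegrableOn g (Ioi t₀) := by
  have hanti := antitoneOn_Ici_of_hasDerivAt_neg hV hg
  set W : ℝ → ℝ := fun t ↦ V (max t₀ t)
  have hW : Antitone W := fun t u htu ↦
    hanti (le_max_left t₀ t) (le_max_left t₀ u) (max_le_max le_rfl htu)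
  have hWV : W =ᶠ[atTop] V := by
    filter_upwards [eventually_ge_atTop t₀] with t ht
    simp [W, max_eq_right ht]
  have hlim : Tendsto V atTop (𝓝 (⨅ t, W t)) :=
    (tendsto_atTop_ciInf hW ⟨m, by rintro _ ⟨t, rfl⟩; exact hm _ (le_max_left t₀ t)⟩).congr' hWV
  refine integrableOn_Ioi_deriv_of_nonneg' (g := fun t ↦ -V t) (fun t ht ↦ ?_)
    (fun t ht ↦ hg t (mem_Ici_of_Ioi ht)) hlim.neg
  have hVt := (hV t ht).neg
  rwa [neg_neg] at hVt
end Lyapunov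

theorem MeasureTheory.IntegrableOn.tendsto_intervalIntegral_add_zero {f : ℝ → ℝ} {a : ℝ}
    (hf : IntegrableOn f (Ioi a)) (δ : ℝ) :
    Tendsto (fun t ↦ ∫ u in t..t + δ, f u) atTop (𝓝 0) := by
  have hF := intervalIntegral_tendsto_integral_Ioi a hf tendsto_id
  have hlim := (hF.comp (tendsto_atTop_add_const_right _ δ tendsto_id)).sub hF
  rw [sub_self] at hlim
  refine hlim.congr' ?_
  have hii (b : ℝ) (hb : a ≤ b) : IntervalIntegrable f volume a b :=
    (intervalIntegrable_iff_integrableOn_Ioc_of_le hb).2 (hf.mono_set Ioc_subset_Ioi_self)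
  filter_upwards [eventually_ge_atTop a, eventually_ge_atTop (a - δ)] with t ht htδ
  exact intervalIntegral.integral_interval_sub_left (hii (t + δ) (by linarith)) (hii t ht)

theorem tendsto_zero_of_integrableOn_Ioi_of_uniformContinuousOn {f : ℝ → ℝ} {a : ℝ}
    (hf : IntegrableOn f (Ioi a)) (huc : UniformContinuousOn f (Ici a)) :
    Tendsto f atTop (𝓝 0) := by
  refine Metric.tendsto_atTop.2 fun ε hε ↦ ?_
  obtain ⟨δ, hδ, hfδ⟩ := Metric.uniformContinuousOn_iff_le.1 huc (ε / 2) (half_pos hε)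
  obtain ⟨N, hN⟩ := eventually_atTop.1 <| (hf.tendsto_intervalIntegral_add_zero δ).eventually
    (Metric.ball_mem_nhds 0 (by positivity : 0 < ε * δ / 2))
  refine ⟨max N a, fun t ht ↦ ?_⟩
  have htN : N ≤ t := le_of_max_le_left ht
  have hta : a ≤ t := le_of_max_le_right ht
  have hnear : ‖∫ u in t..t + δ, (f u - f t)‖ ≤ ε / 2 * |t + δ - t| := by
    refine intervalIntegral.norm_integral_le_of_norm_le_const fun u hu ↦ ?_
    rw [uIoc_of_le (by linarith)] at hu
    rw [← dist_eq_norm]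
    refine hfδ u (hta.trans hu.1.le) t hta ?_
    rw [Real.dist_eq, abs_of_pos (by linarith [hu.1])]
    linarith [hu.2]
  have hfi : IntervalIntegrable f volume t (t + δ) :=
    (intervalIntegrable_iff_integrableOn_Ioc_of_le (by linarith)).2
      (hf.mono_set fun u hu ↦ hta.trans_lt hu.1)
  rw [intervalIntegral.integral_sub hfi intervalIntegrable_const, intervalIntegral.integral_const,
    add_sub_cancel_left, smul_eq_mul, abs_of_pos hδ, Real.norm_eq_abs] at hnear
  have hsmall := hN t htN
  rw [Real.dist_eq, sub_zero] at hsmall ⊢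
  -- `δ |f t| ≤ |∫ f| + |∫ (f - f t)| < εδ/2 + εδ/2`
  have hδf : δ * |f t| < δ * ε := by
    have := abs_sub_abs_le_abs_sub (δ * f t) (∫ u in t..t + δ, f u)
    rw [abs_sub_comm, abs_mul, abs_of_pos hδ] at this
    linarith
  exact lt_of_mul_lt_mul_left hδf hδ.le

theorem MeasureTheory.IntegrableOn.of_continuousOn_of_le {f g : ℝ → ℝ} {S : Set ℝ}
    (hg : IntegrableOn g S) (hS : MeasurableSet S) (hf : ContinuousOn f S)
    (hf0 : ∀ t ∈ S, 0 ≤ f t) (hfg : ∀ t ∈ S, f t ≤ g t) : IntegrableOn f S :=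
  hg.mono' (hf.aestronglyMeasurable hS) <| (ae_restrict_iff' hS).2 <|
    Eventually.of_forall fun t ht ↦ (Real.norm_of_nonneg (hf0 t ht)).trans_le (hfg t ht)

theorem uniformContinuousOn_Ici_of_hasDerivAt {f f' : ℝ → ℝ} {a C : ℝ}
    (hf : ∀ t ∈ Ici a, HasDerivAt f (f' t) t) (hC : ∀ t ∈ Ici a, |f' t| ≤ C) :
    UniformContinuousOn f (Ici a) := by
  refine (Convex.lipschitzOnWith_of_nnnorm_hasDerivWithin_le (C := C.toNNReal) (convex_Ici a)
    (fun t ht ↦ (hf t ht).hasDerivWithinAt) fun t ht ↦ ?_).uniformContinuousOn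
  rw [← NNReal.coe_le_coe, coe_nnnorm, Real.coe_toNNReal']
  exact (hC t ht).trans (le_max_left _ _)

theorem inL2_of_integrableOn {F : Type*} [NormedAddCommGroup F] {g : ℝ → F}
    (hg : IntegrableOn (fun t ↦ ‖g t‖ ^ 2) (Ioi 0)) : InL2 g :=
  (integrableOn_Ici_iff_integrableOn_Ioi).2 hg |>.lintegral_lt_top

section AdaptationLaw
variable {E : Type*} [NormedAddCommGroup E] [InnerProductSpace ℝ E]
  {s : ℝ → ℝ} {Y : ℝ → E} {a : E} {ahat abar : ℝ → E} {P Q : E →L[ℝ] E} {η k : ℝ}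

theorem HasDerivAt.inner_map_self (hQ : (Q : E →ₗ[ℝ] E).IsSymmetric)
    {f : ℝ → E} {f' : E} {t : ℝ} (hf : HasDerivAt f f' t) :
    HasDerivAt (fun u ↦ ⟪f u, Q (f u)⟫) (2 * ⟪f t, Q f'⟫) t := by
  refine (hf.inner ℝ (Q.hasFDerivAt.comp_hasDerivAt t hf)).congr_deriv ?_
  have hsymm : ⟪f', Q (f t)⟫ = ⟪f t, Q f'⟫ := (real_inner_comm _ _).trans (hQ _ _)
  rw [Function.comp_apply, hsymm, two_mul]

def elasticLyapunov (Q : E →L[ℝ] E) (a : E) (s : ℝ → ℝ) (ahat abar : ℝ → E) (t : ℝ) : ℝ :=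
  s t ^ 2 + ⟪ahat t - a, Q (ahat t - a)⟫ + ⟪abar t - a, Q (abar t - a)⟫

theorem hasDerivAt_elasticLyapunov (hQP : ∀ v, Q (P v) = v)
    (hQ : (Q : E →ₗ[ℝ] E).IsSymmetric) {t : ℝ}
    (hs : HasDerivAt s (-η * s t + ⟪Y t, ahat t - a⟫) t)
    (ha : HasDerivAt ahat (-(P (s t • Y t)) + k • (abar t - ahat t)) t)
    (hb : HasDerivAt abar (k • (ahat t - abar t)) t) :
    HasDerivAt (elasticLyapunov Q a s ahat abar)
      (-(2 * η * s t ^ 2 + 2 * k * ⟪ahat t - abar t, Q (ahat t - abar t)⟫)) t := by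
  refine (((hs.pow 2).add ((ha.sub_const a).inner_map_self hQ)).add
    ((hb.sub_const a).inner_map_self hQ)).congr_deriv ?_
  have hd : ⟪ahat t - abar t, Q (ahat t - abar t)⟫
      = ⟪ahat t - a, Q (ahat t - abar t)⟫ - ⟪abar t - a, Q (ahat t - abar t)⟫ := by
    rw [← inner_sub_left, sub_sub_sub_cancel_right]
  rw [← neg_sub (ahat t)]
  simp only [map_add, map_neg, map_smul, hQP, inner_add_right, inner_neg_right,
    real_inner_smul_right]
  rw [real_inner_comm (ahat t - a), hd]
  push_cast
  ring

theorem elasticLyapunov_antitoneOn_and_integrableOn (hη : 0 ≤ η) (hk : 0 ≤ k)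
    (hQP : ∀ v, Q (P v) = v) (hQ : (Q : E →ₗ[ℝ] E).IsSymmetric) (hQnn : ∀ v, 0 ≤ ⟪v, Q v⟫)
    (hs : ∀ t ∈ Ici 0, HasDerivAt s (-η * s t + ⟪Y t, ahat t - a⟫) t)
    (ha : ∀ t ∈ Ici 0, HasDerivAt ahat (-(P (s t • Y t)) + k • (abar t - ahat t)) t)
    (hb : ∀ t ∈ Ici 0, HasDerivAt abar (k • (ahat t - abar t)) t) :
    AntitoneOn (elasticLyapunov Q a s ahat abar) (Ici 0) ∧
      IntegrableOn (fun t ↦ 2 * η * s t ^ 2 + 2 * k * ⟪ahat t - abar t, Q (ahat t - abar t)⟫)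
        (Ioi 0) := by
  have hV (t : ℝ) (ht : t ∈ Ici 0) := hasDerivAt_elasticLyapunov hQP hQ (hs t ht) (ha t ht) (hb t ht)
  have hg (t : ℝ) (_ : t ∈ Ici (0 : ℝ)) :
      0 ≤ 2 * η * s t ^ 2 + 2 * k * ⟪ahat t - abar t, Q (ahat t - abar t)⟫ :=
    add_nonneg (by positivity) (mul_nonneg (by positivity) (hQnn _))
  have hVnn (t : ℝ) (_ : t ∈ Ici (0 : ℝ)) : 0 ≤ elasticLyapunov Q a s ahat abar t :=
    add_nonneg (add_nonneg (sq_nonneg _) (hQnn _)) (hQnn _)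
  exact ⟨antitoneOn_Ici_of_hasDerivAt_neg hV hg, integrableOn_Ioi_of_hasDerivAt_neg hV hg hVnn⟩

theorem exists_bound_and_integrableOn_of_elastic (hη : 0 < η) (hk : 0 < k)
    (hQP : ∀ v, Q (P v) = v) (hQ : (Q : E →ₗ[ℝ] E).IsSymmetric)
    {c : ℝ} (hc : 0 < c) (hQc : ∀ v, c * ‖v‖ ^ 2 ≤ ⟪v, Q v⟫)
    (hs : ∀ t ∈ Ici 0, HasDerivAt s (-η * s t + ⟪Y t, ahat t - a⟫) t)
    (ha : ∀ t ∈ Ici 0, HasDerivAt ahat (-(P (s t • Y t)) + k • (abar t - ahat t)) t)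
    (hb : ∀ t ∈ Ici 0, HasDerivAt abar (k • (ahat t - abar t)) t) :
    ∃ C, (∀ t ∈ Ici 0, |s t| ≤ C ∧ ‖ahat t - a‖ ≤ C ∧ ‖abar t - a‖ ≤ C) ∧
      IntegrableOn (fun t ↦ s t ^ 2) (Ioi 0) ∧
      IntegrableOn (fun t ↦ ‖ahat t - abar t‖ ^ 2) (Ioi 0) := by
  have hQnn (v : E) : 0 ≤ ⟪v, Q v⟫ := (mul_nonneg hc.le (sq_nonneg _)).trans (hQc v)
  obtain ⟨hanti, hgi⟩ :=
    elasticLyapunov_antitoneOn_and_integrableOn hη.le hk.le hQP hQ hQnn hs ha hb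
  set V := elasticLyapunov Q a s ahat abar
  set c' := min 1 c
  have hc' : 0 < c' := lt_min one_pos hc
  have hQc' (v : E) : c' * ‖v‖ ^ 2 ≤ ⟪v, Q v⟫ :=
    (mul_le_mul_of_nonneg_right (min_le_right 1 c) (sq_nonneg _)).trans (hQc v)
  have hVle (t : ℝ) (ht : t ∈ Ici 0) :
      c' * s t ^ 2 ≤ V 0 ∧ c' * ‖ahat t - a‖ ^ 2 ≤ V 0 ∧ c' * ‖abar t - a‖ ^ 2 ≤ V 0 := by
    have hV0 : V t ≤ V 0 := hanti self_mem_Ici ht ht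
    have hs1 : c' * s t ^ 2 ≤ s t ^ 2 :=
      mul_le_of_le_one_left (sq_nonneg _) (min_le_left 1 c)
    have hA := hQc' (ahat t - a)
    have hB := hQc' (abar t - a)
    rw [show V t = s t ^ 2 + ⟪ahat t - a, Q (ahat t - a)⟫ + ⟪abar t - a, Q (abar t - a)⟫
      from rfl] at hV0
    refine ⟨?_, ?_, ?_⟩ <;> linarith [hQnn (ahat t - a), hQnn (abar t - a), sq_nonneg (s t)]
  have hsqrt {x : ℝ} (hx : c' * x ^ 2 ≤ V 0) : |x| ≤ √(V 0 / c') :=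
    Real.abs_le_sqrt ((le_div_iff₀' hc').2 hx)
  refine ⟨√(V 0 / c'), fun t ht ↦ ⟨hsqrt (hVle t ht).1, ?_, ?_⟩, ?_, ?_⟩
  · simpa using hsqrt (hVle t ht).2.1
  · simpa using hsqrt (hVle t ht).2.2
  · refine IntegrableOn.of_continuousOn_of_le (hgi.div_const (2 * η)) measurableSet_Ioi
      (fun t ht ↦ ((hs t (mem_Ici_of_Ioi ht)).continuousAt.pow 2).continuousWithinAt)
      (fun t _ ↦ sq_nonneg _) fun t _ ↦ ?_
    rw [le_div_iff₀ (by positivity)]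
    nlinarith [hQnn (ahat t - abar t)]
  · refine IntegrableOn.of_continuousOn_of_le (hgi.div_const (2 * k * c)) measurableSet_Ioi
      (fun t ht ↦ (((ha t (mem_Ici_of_Ioi ht)).continuousAt.sub
        (hb t (mem_Ici_of_Ioi ht)).continuousAt).norm.pow 2).continuousWithinAt)
      (fun t _ ↦ sq_nonneg _) fun t _ ↦ ?_
    rw [le_div_iff₀ (by positivity)]
    nlinarith [hQc (ahat t - abar t), sq_nonneg (s t)]
end AdaptationLaw

theorem tendsto_zero_of_integrableOn_sq_of_hasDerivAt {s s' : ℝ → ℝ} {a C D : ℝ}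
    (hs : ∀ t ∈ Ici a, HasDerivAt s (s' t) t) (hsC : ∀ t ∈ Ici a, |s t| ≤ C)
    (hs'D : ∀ t ∈ Ici a, |s' t| ≤ D) (hs2 : IntegrableOn (fun t ↦ s t ^ 2) (Ioi a)) :
    Tendsto s atTop (𝓝 0) := by
  have hsq : Tendsto (fun t ↦ s t ^ 2) atTop (𝓝 0) := by
    refine tendsto_zero_of_integrableOn_Ioi_of_uniformContinuousOn hs2 <|
      uniformContinuousOn_Ici_of_hasDerivAt (C := 2 * C * D) (fun t ht ↦ (hs t ht).pow 2)
        fun t ht ↦ ?_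
    norm_num only [abs_mul, mul_assoc, pow_one]
    gcongr
    · exact (abs_nonneg _).trans (hsC t ht)
    · exact hsC t ht
    · exact hs'D t ht
  rw [tendsto_zero_iff_abs_tendsto_zero]
  simpa [Function.comp_def, Real.sqrt_sq_eq_abs] using (Real.continuous_sqrt.tendsto 0).comp hsq

theorem inLinf_of_norm_sub_le {F : Type*} [NormedAddCommGroup F] {f : ℝ → F} (a : F) {C : ℝ}
    (h : ∀ t ∈ Ici 0, ‖f t - a‖ ≤ C) : InLinf f :=
  ⟨C + ‖a‖, fun t ht ↦ by linarith [norm_le_norm_add_norm_sub' (f t) a, h t ht]⟩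

/-- elastic modification of the Slotine–Li adaptation law.
The error dynamics `ṡ = -η s + Y(t)(â - a)` together with the elastic adaptation law
`â̇ = -P Y(t)ᵀ s + k(ā - â)`, `ā̇ = k(â - ā)`, `P = Pᵀ > 0`, `k > 0`, guarantees that all
trajectories remain bounded, `s ∈ L² ∩ L∞`, `(â - ā) ∈ L²`, `s → 0` and `x → x_d`. -/
theorem elastic_adaptation_linear
    {n p : ℕ}
    (x xd : ℝ → EuclideanSpace ℝ (Fin n))
    (s : ℝ → ℝ)
    (Y : ℝ → EuclideanSpace ℝ (Fin p))
    (a : EuclideanSpace ℝ (Fin p))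
    (ahat abar : ℝ → EuclideanSpace ℝ (Fin p))
    (P : EuclideanSpace ℝ (Fin p) →L[ℝ] EuclideanSpace ℝ (Fin p))
    (η k : ℝ)
    (hη : 0 < η) (hk : 0 < k)
    -- P is symmetric positive definite
    (hPsym : ∀ v w : EuclideanSpace ℝ (Fin p), ⟪P v, w⟫ = ⟪v, P w⟫)
    (hPpos : ∀ v : EuclideanSpace ℝ (Fin p), v ≠ 0 → 0 < ⟪v, P v⟫)
    -- error dynamics ṡ = -η s + Y (â - a)
    (hs : ∀ t, 0 ≤ t → HasDerivAt s (-η * s t + ⟪Y t, ahat t - a⟫) t)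
    -- elastic adaptation law
    (ha : ∀ t, 0 ≤ t →
      HasDerivAt ahat (-(P (s t • Y t)) + k • (abar t - ahat t)) t)
    (hb : ∀ t, 0 ≤ t → HasDerivAt abar (k • (ahat t - abar t)) t)
    -- the regressor Y(x, t) is locally bounded in x uniformly in t
    (hYloc : ∀ R : ℝ, ∃ M : ℝ, ∀ t, 0 ≤ t → ‖x t‖ ≤ R → ‖Y t‖ ≤ M)
    -- boundedness of s implies boundedness of x
    (hsx : InLinf s → InLinf x)
    -- s → 0 implies x → x_d
    (hxd : Tendsto s atTop (nhds 0) →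
      Tendsto (fun t => x t - xd t) atTop (nhds 0)) :
    InLinf x ∧ InLinf ahat ∧ InLinf abar ∧
    (InL2 s ∧ InLinf s) ∧
    InL2 (fun t => ahat t - abar t) ∧
    Tendsto s atTop (nhds 0) ∧
    Tendsto (fun t => x t - xd t) atTop (nhds 0) := by
  obtain ⟨Q, hQP, hQ, hQpos⟩ := exists_inverse_of_isSymmetric_of_inner_pos P hPsym hPpos
  obtain ⟨c, hc, hQc⟩ := exists_pos_mul_norm_sq_le_inner_map_self Q hQpos
  obtain ⟨C, hC, hs2, hd2⟩ :=
    exists_bound_and_integrableOn_of_elastic hη hk hQP hQ hc hQc hs ha hb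
  have hsLinf : InLinf s := ⟨C, fun t ht ↦ (hC t ht).1⟩
  obtain ⟨R, hR⟩ := hsx hsLinf
  obtain ⟨M, hM⟩ := hYloc R
  have hs' (t : ℝ) (ht : t ∈ Ici 0) : |-η * s t + ⟪Y t, ahat t - a⟫| ≤ η * C + M * C := by
    have hY : ‖Y t‖ ≤ M := hM t ht (hR t ht)
    calc |-η * s t + ⟪Y t, ahat t - a⟫| ≤ |-η * s t| + |⟪Y t, ahat t - a⟫| := abs_add_le _ _
      _ ≤ η * |s t| + ‖Y t‖ * ‖ahat t - a‖ := by
          rw [abs_mul, abs_neg, abs_of_pos hη]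
          exact add_le_add_right (abs_real_inner_le_norm _ _) _
      _ ≤ η * C + M * C :=
          add_le_add (mul_le_mul_of_nonneg_left (hC t ht).1 hη.le)
            (mul_le_mul hY (hC t ht).2.1 (norm_nonneg _) ((norm_nonneg _).trans hY))
  have hs0 : Tendsto s atTop (𝓝 0) :=
    tendsto_zero_of_integrableOn_sq_of_hasDerivAt hs (fun t ht ↦ (hC t ht).1) hs' hs2
  exact ⟨hsx hsLinf, inLinf_of_norm_sub_le a fun t ht ↦ (hC t ht).2.1,
    inLinf_of_norm_sub_le a fun t ht ↦ (hC t ht).2.2,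
    ⟨inL2_of_integrableOn (by simpa using hs2), hsLinf⟩, inL2_of_integrableOn hd2, hs0, hxd hs0⟩

end
end
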